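/- The derivation module D(𝒜₂₄₀) of the central hyperplane arrangement 𝒜₂₄₀ in ℂ⁴ with defining equation Q₂₄₀ = x·y·z·w·(x+y+z)·(x+y−z+w)·(x−y+z+w)·(x−y−z−w) is not a free module over S = ℂ[x,y,z,w]. -/

import Mathlib

open MvPolynomial

noncomputable section

/-- The polynomial ring `S = ℂ[x,y,z,w]`, with `x = X 0`, `y = X 1`, `z = X 2`, `w = X 3`. -/
abbrev S4 : Type := MvPolynomial (Fin 4) ℂ

/-- The linear form `c₀·x + c₁·y + c₂·z + c₃·w` with coefficient vector `c`. -/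
noncomputable def linForm (c : Fin 4 → ℂ) : S4 := ∑ i, C (c i) * X i

/-- A polynomial derivation `θ = a₁∂ₓ + a₂∂_y + a₃∂_z + a₄∂_w` of `S` is identified with
its coefficient tuple `a : Fin 4 → S`; the linear map `derMap f` sends `a` to `θ(f)`. -/
noncomputable def derMap (f : S4) : (Fin 4 → S4) →ₗ[S4] S4 where
  toFun a := ∑ i, a i * pderiv i f
  map_add' a b := by simp [add_mul, Finset.sum_add_distrib]
  map_smul' c a := by simp [Finset.mul_sum, mul_assoc]

/-- The derivation module `D(𝒜)` of the central arrangement whose hyperplanes are the kernels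
of the linear forms `linForm (α H)`: all derivations `θ` with `θ(α_H) ∈ S·α_H` for every `H`. -/
noncomputable def derivModule {ι : Type} (α : ι → (Fin 4 → ℂ)) :
    Submodule S4 (Fin 4 → S4) :=
  ⨅ H, Submodule.comap (derMap (linForm (α H))) (Ideal.span {linForm (α H)})

end

/-- The coefficient vectors of the eight linear factors of Q = xyzw(x+y+z)(x+y-z+w)(x-y+z+w)(x-y-z-w), defining the rigid Cynk–Szemberg octic arrangement 𝒜₂₄₀ ⊂ ℙ³. -/
noncomputable def A240 : Fin 8 → (Fin 4 → ℂ) :=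
  ![![1, 0, 0, 0],
    ![0, 1, 0, 0],
    ![0, 0, 1, 0],
    ![0, 0, 0, 1],
    ![1, 1, 1, 0],
    ![1, 1, -1, 1],
    ![1, -1, 1, 1],
    ![1, -1, -1, -1]]

/-!
The variables `x, y, z` form a regular sequence in `S`, hence on every free `S`-module `M`:
`z • u ∈ (x, y) M` forces `u ∈ (x, y) M`. For `M = D(𝒜₂₄₀)` this fails. The explicit derivations
`U, V₁, V₂ ∈ D` satisfy `z U = x V₁ + y V₂`, while the functional
`θ ↦ ∂_y²∂_w² θ₁(0) - 2 ∂_x∂_y∂_w² θ₀(0)` takes the value `-12` at `U` and vanishes on `x D + y D`: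
on `x θ + y η` it equals `2 (∂_y∂_w² η₁(0) - ∂_y∂_w² θ₀(0) - ∂_x∂_w² η₀(0))`, and the tangency
conditions along `x`, `y`, `z` and `x + y + z` kill this combination of third-order jets.
-/

theorem Module.Basis.mem_ideal_smul_top_iff {ι R M : Type*} [CommSemiring R] [AddCommMonoid M]
    [Module R M] (b : Module.Basis ι R M) {I : Ideal R} {m : M} :
    m ∈ I • (⊤ : Submodule R M) ↔ ∀ i, b.repr m i ∈ I := by
  constructor
  · intro hm i
    refine Submodule.smul_induction_on (p := fun m => b.repr m i ∈ I) hm ?_ ?_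
    · intro r hr n _
      simpa using I.mul_mem_right _ hr
    · intro m m' hm hm'
      simpa using I.add_mem hm hm'
  · intro hm
    rw [← b.linearCombination_repr m, Finsupp.linearCombination_apply]
    exact Submodule.sum_mem _ fun i _ => Submodule.smul_mem_smul (hm i) Submodule.mem_top

theorem Module.Free.mem_ideal_smul_top_of_smul_mem {R M : Type*} [CommSemiring R]
    [AddCommMonoid M] [Module R M] [Module.Free R M] {I : Ideal R} {z : R}
    (hz : ∀ p, z * p ∈ I → p ∈ I) {u : M} (h : z • u ∈ I • (⊤ : Submodule R M)) :
    u ∈ I • (⊤ : Submodule R M) := by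
  let b := Module.Free.chooseBasis R M
  rw [b.mem_ideal_smul_top_iff] at h ⊢
  exact fun i => hz _ (by simpa using h i)

open Pointwise in
theorem Submodule.mem_ideal_span_pair_smul_top_iff {R M : Type*} [CommSemiring R]
    [AddCommMonoid M] [Module R M] {x y : R} {m : M} :
    m ∈ Ideal.span {x, y} • (⊤ : Submodule R M) ↔ ∃ a b : M, x • a + y • b = m := by
  simp only [Ideal.span_insert, Submodule.sup_smul, Submodule.ideal_span_singleton_smul,
    Submodule.mem_sup, Submodule.mem_smul_pointwise_iff_exists, Submodule.mem_top, true_and]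
  constructor
  · rintro ⟨_, ⟨a, rfl⟩, _, ⟨b, rfl⟩, rfl⟩
    exact ⟨a, b, rfl⟩
  · rintro ⟨a, b, rfl⟩
    exact ⟨_, ⟨a, rfl⟩, _, ⟨b, rfl⟩, rfl⟩

theorem Module.Free.exists_smul_add_smul_of_smul_eq {R M : Type*} [CommSemiring R]
    [AddCommMonoid M] [Module R M] [Module.Free R M] {x y z : R}
    (hz : ∀ p, z * p ∈ Ideal.span {x, y} → p ∈ Ideal.span {x, y}) {u v w : M}
    (h : z • u = x • v + y • w) : ∃ a b : M, x • a + y • b = u := by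
  rw [← Submodule.mem_ideal_span_pair_smul_top_iff]
  exact Module.Free.mem_ideal_smul_top_of_smul_mem hz
    (Submodule.mem_ideal_span_pair_smul_top_iff.2 ⟨v, w, h.symm⟩)

theorem MvPolynomial.mem_ideal_span_X_image_of_X_mul_mem {σ R : Type*} [CommSemiring R]
    {s : Set σ} {i : σ} (hi : i ∉ s) {p : MvPolynomial σ R}
    (h : X i * p ∈ Ideal.span (X '' s)) : p ∈ Ideal.span (X '' s) := by
  classical
  rw [mem_ideal_span_X_image] at h ⊢
  intro m hm
  obtain ⟨j, hj, hne⟩ := h _ (by rw [support_X_mul]; exact Finset.mem_map_of_mem _ hm)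
  have hij : i ≠ j := fun hij => hi (hij ▸ hj)
  exact ⟨j, hj, by simpa [Finsupp.single_apply, hij] using hne⟩

noncomputable section

def wJet (i : Fin 4) (p : S4) : ℂ :=
  eval 0 (pderiv i (pderiv 3 (pderiv 3 p)))

def wJet₂ (i j : Fin 4) (p : S4) : ℂ :=
  eval 0 (pderiv i (pderiv j (pderiv 3 (pderiv 3 p))))

theorem wJet_add (i : Fin 4) (p q : S4) : wJet i (p + q) = wJet i p + wJet i q := by
  simp [wJet]

theorem wJet₂_add (i j : Fin 4) (p q : S4) : wJet₂ i j (p + q) = wJet₂ i j p + wJet₂ i j q := by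
  simp [wJet₂]

theorem wJet_X_mul (i : Fin 4) {j : Fin 4} (hj : j ≠ 3) (q : S4) :
    wJet i (X j * q) = if i = j then eval 0 (pderiv 3 (pderiv 3 q)) else 0 := by
  have h3 : pderiv 3 (X j : S4) = 0 := by simp [pderiv_X, hj]
  split_ifs with hij <;> simp [wJet, h3, pderiv_X, hij]

theorem wJet₂_X_mul (i j : Fin 4) {k : Fin 4} (hk : k ≠ 3) (q : S4) :
    wJet₂ i j (X k * q) = (if j = k then wJet i q else 0) + (if i = k then wJet j q else 0) := by
  have h3 : pderiv 3 (X k : S4) = 0 := by simp [pderiv_X, hk]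
  by_cases hj : j = k <;> by_cases hi : i = k <;> simp [wJet₂, wJet, h3, pderiv_X, hi, hj]

end

namespace A240

noncomputable section

local notation "x" => (X 0 : S4)
local notation "y" => (X 1 : S4)
local notation "z" => (X 2 : S4)
local notation "w" => (X 3 : S4)

theorem X_two_mul_mem_span_pair {p : S4} (h : z * p ∈ Ideal.span {x, y}) :
    p ∈ Ideal.span {x, y} := by
  rw [← Set.image_pair] at h ⊢
  exact mem_ideal_span_X_image_of_X_mul_mem (by decide) h

theorem mem_derivModule_iff {θ : Fin 4 → S4} :
    θ ∈ derivModule A240 ↔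
      x ∣ θ 0 ∧ y ∣ θ 1 ∧ z ∣ θ 2 ∧ w ∣ θ 3 ∧
      x + y + z ∣ θ 0 + θ 1 + θ 2 ∧
      x + y - z + w ∣ θ 0 + θ 1 - θ 2 + θ 3 ∧
      x - y + z + w ∣ θ 0 - θ 1 + θ 2 + θ 3 ∧
      x - y - z - w ∣ θ 0 - θ 1 - θ 2 - θ 3 := by
  simp [derivModule, Submodule.mem_iInf, Ideal.mem_span_singleton, Fin.forall_fin_succ, A240,
    linForm, derMap, Fin.sum_univ_four, sub_eq_add_neg, add_assoc]

def U : Fin 4 → S4 :=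
  ![2 * x * y * w ^ 2 + x ^ 2 * w ^ 2 - 3 * x ^ 2 * z ^ 2 + 3 * x ^ 2 * y ^ 2 + x ^ 3 * y -
      x ^ 4,
    -y ^ 2 * w ^ 2 + 3 * y ^ 2 * z ^ 2 + y ^ 4 - 2 * x * y * w ^ 2 + 2 * x * y ^ 3,
    -y * z * w ^ 2 + y * z ^ 3 + 3 * y ^ 3 * z + x * z * w ^ 2 - x * z ^ 3 + 3 * x * y ^ 2 * z -
      3 * x ^ 3 * z,
    3 * x ^ 2 * y * w]

def V₁ : Fin 4 → S4 :=
  ![x * z * w ^ 2 - 3 * x * z ^ 3 - x * y * w ^ 2 - 3 * x * y * z ^ 2 + 3 * x * y ^ 2 * z +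
      3 * x * y ^ 3 - x ^ 3 * z + x ^ 3 * y,
    -2 * y * z * w ^ 2 - y ^ 2 * w ^ 2 - 3 * y ^ 2 * z ^ 2 + 2 * y ^ 3 * z + y ^ 4 +
      3 * x ^ 2 * y ^ 2,
    z ^ 2 * w ^ 2 - z ^ 4 + 2 * y * z * w ^ 2 - 2 * y * z ^ 3 + 3 * y ^ 2 * z ^ 2 -
      3 * x ^ 2 * z ^ 2,
    0]

def V₂ : Fin 4 → S4 :=
  ![2 * x * z * w ^ 2 + x ^ 2 * w ^ 2 + 3 * x ^ 2 * z ^ 2 - 3 * x ^ 2 * y ^ 2 + x ^ 3 * z -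
      x ^ 4,
    -y * z * w ^ 2 + 3 * y * z ^ 3 + y ^ 3 * z + x * y * w ^ 2 + 3 * x * y * z ^ 2 - x * y ^ 3 -
      3 * x ^ 3 * y,
    -z ^ 2 * w ^ 2 + z ^ 4 + 3 * y ^ 2 * z ^ 2 - 2 * x * z * w ^ 2 + 2 * x * z ^ 3,
    3 * x ^ 2 * z * w]

theorem U_mem : U ∈ derivModule A240 := by
  refine mem_derivModule_iff.2
    ⟨⟨2 * y * w ^ 2 + x * w ^ 2 - 3 * x * z ^ 2 + 3 * x * y ^ 2 + x ^ 2 * y - x ^ 3, ?_⟩,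
    ⟨-y * w ^ 2 + 3 * y * z ^ 2 + y ^ 3 - 2 * x * w ^ 2 + 2 * x * y ^ 2, ?_⟩,
    ⟨-y * w ^ 2 + y * z ^ 2 + 3 * y ^ 3 + x * w ^ 2 - x * z ^ 2 + 3 * x * y ^ 2 - 3 * x ^ 3, ?_⟩,
    ⟨3 * x ^ 2 * y, ?_⟩,
    ⟨-y * w ^ 2 + y * z ^ 2 + 2 * y ^ 2 * z + y ^ 3 + x * w ^ 2 - x * z ^ 2 + x * y ^ 2 -
      2 * x ^ 2 * z + 2 * x ^ 2 * y - x ^ 3, ?_⟩,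
    ⟨y * z * w + y * z ^ 2 - y ^ 2 * w - 2 * y ^ 2 * z + y ^ 3 - x * z * w - x * z ^ 2 +
      x * y ^ 2 + x ^ 2 * w + 2 * x ^ 2 * z + 2 * x ^ 2 * y - x ^ 3, ?_⟩,
    ⟨-y * z * w + y * z ^ 2 + y ^ 2 * w - 2 * y ^ 2 * z + y ^ 3 + x * z * w - x * z ^ 2 +
      4 * x * y * w - 2 * x * y * z + 3 * x * y ^ 2 + x ^ 2 * w - 2 * x ^ 2 * z - x ^ 3, ?_⟩,
    ⟨-y * z * w + y * z ^ 2 - y ^ 2 * w + 2 * y ^ 2 * z + y ^ 3 + x * z * w - x * z ^ 2 -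
      4 * x * y * w + 2 * x * y * z + 3 * x * y ^ 2 - x ^ 2 * w + 2 * x ^ 2 * z - x ^ 3, ?_⟩⟩ <;>
  simp [U] <;> ring

theorem V₁_mem : V₁ ∈ derivModule A240 := by
  refine mem_derivModule_iff.2
    ⟨⟨z * w ^ 2 - 3 * z ^ 3 - y * w ^ 2 - 3 * y * z ^ 2 + 3 * y ^ 2 * z + 3 * y ^ 3 - x ^ 2 * z +
      x ^ 2 * y, ?_⟩,
    ⟨-2 * z * w ^ 2 - y * w ^ 2 - 3 * y * z ^ 2 + 2 * y ^ 2 * z + y ^ 3 + 3 * x ^ 2 * y, ?_⟩,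
    ⟨z * w ^ 2 - z ^ 3 + 2 * y * w ^ 2 - 2 * y * z ^ 2 + 3 * y ^ 2 * z - 3 * x ^ 2 * z, ?_⟩,
    ⟨0, ?_⟩,
    ⟨z * w ^ 2 - z ^ 3 - y * w ^ 2 - y * z ^ 2 + y ^ 2 * z + y ^ 3 - 2 * x * z ^ 2 +
      2 * x * y ^ 2 - x ^ 2 * z + x ^ 2 * y, ?_⟩,
    ⟨-z ^ 2 * w - z ^ 3 - 4 * y * z * w - 3 * y * z ^ 2 - y ^ 2 * w + 3 * y ^ 2 * z + y ^ 3 +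
      x * z * w + 2 * x * z ^ 2 - x * y * w + 2 * x * y * z + 2 * x * y ^ 2 - x ^ 2 * z +
      x ^ 2 * y, ?_⟩,
    ⟨z ^ 2 * w - z ^ 3 + 4 * y * z * w - 3 * y * z ^ 2 + y ^ 2 * w + 3 * y ^ 2 * z + y ^ 3 +
      x * z * w - 2 * x * z ^ 2 - x * y * w - 2 * x * y * z - 2 * x * y ^ 2 - x ^ 2 * z +
      x ^ 2 * y, ?_⟩,
    ⟨z ^ 2 * w - z ^ 3 - y * z ^ 2 - y ^ 2 * w + y ^ 2 * z + y ^ 3 - x * z * w + 2 * x * z ^ 2 +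
      x * y * w - 2 * x * y ^ 2 - x ^ 2 * z + x ^ 2 * y, ?_⟩⟩ <;>
  simp [V₁] <;> ring

theorem V₂_mem : V₂ ∈ derivModule A240 := by
  refine mem_derivModule_iff.2
    ⟨⟨2 * z * w ^ 2 + x * w ^ 2 + 3 * x * z ^ 2 - 3 * x * y ^ 2 + x ^ 2 * z - x ^ 3, ?_⟩,
    ⟨-z * w ^ 2 + 3 * z ^ 3 + y ^ 2 * z + x * w ^ 2 + 3 * x * z ^ 2 - x * y ^ 2 - 3 * x ^ 3, ?_⟩,
    ⟨-z * w ^ 2 + z ^ 3 + 3 * y ^ 2 * z - 2 * x * w ^ 2 + 2 * x * z ^ 2, ?_⟩,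
    ⟨3 * x ^ 2 * z, ?_⟩,
    ⟨-z * w ^ 2 + z ^ 3 + 2 * y * z ^ 2 + y ^ 2 * z + x * w ^ 2 + x * z ^ 2 - x * y ^ 2 +
      2 * x ^ 2 * z - 2 * x ^ 2 * y - x ^ 3, ?_⟩,
    ⟨z ^ 2 * w + z ^ 3 - y * z * w - 2 * y * z ^ 2 + y ^ 2 * z + 4 * x * z * w + 3 * x * z ^ 2 +
      x * y * w - 2 * x * y * z - x * y ^ 2 + x ^ 2 * w - 2 * x ^ 2 * y - x ^ 3, ?_⟩,
    ⟨-z ^ 2 * w + z ^ 3 + y * z * w - 2 * y * z ^ 2 + y ^ 2 * z + x * z ^ 2 - x * y * w -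
      x * y ^ 2 + x ^ 2 * w + 2 * x ^ 2 * z + 2 * x ^ 2 * y - x ^ 3, ?_⟩,
    ⟨-z ^ 2 * w + z ^ 3 - y * z * w + 2 * y * z ^ 2 + y ^ 2 * z - 4 * x * z * w + 3 * x * z ^ 2 +
      x * y * w + 2 * x * y * z - x * y ^ 2 - x ^ 2 * w + 2 * x ^ 2 * y - x ^ 3, ?_⟩⟩ <;>
  simp [V₂] <;> ring

theorem X_two_smul_U : z • U = x • V₁ + y • V₂ := by
  funext i
  fin_cases i <;> simp [U, V₁, V₂] <;> ring

theorem wJet_one_apply_zero {θ : Fin 4 → S4} (hθ : θ ∈ derivModule A240) :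
    wJet 1 (θ 0) = 0 := by
  obtain ⟨⟨q, hq⟩, -⟩ := mem_derivModule_iff.1 hθ
  simp [hq, wJet_X_mul]

theorem wJet_one_apply_one {θ : Fin 4 → S4} (hθ : θ ∈ derivModule A240) :
    wJet 1 (θ 1) = wJet 0 (θ 0) := by
  obtain ⟨⟨q₀, h₀⟩, ⟨q₁, h₁⟩, ⟨q₂, h₂⟩, -, ⟨q, h⟩, -⟩ := mem_derivModule_iff.1 hθ
  have h_x := congrArg (wJet 0) h
  have h_y := congrArg (wJet 1) h
  rw [h₀, h₁, h₂] at h_x h_y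
  rw [h₀, h₁]
  simp [add_mul, wJet_add, wJet_X_mul] at h_x h_y ⊢
  rw [h_x, h_y]

def obstruction (θ : Fin 4 → S4) : ℂ :=
  wJet₂ 1 1 (θ 1) - 2 * wJet₂ 0 1 (θ 0)

theorem obstruction_smul_add_smul {θ η : Fin 4 → S4} (hθ : θ ∈ derivModule A240)
    (hη : η ∈ derivModule A240) : obstruction (x • θ + y • η) = 0 := by
  simp [obstruction, wJet₂_add, wJet₂_X_mul, wJet_one_apply_zero hθ, wJet_one_apply_one hη]
  ring

theorem obstruction_U : obstruction U = -12 := by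
  simp [obstruction, U, wJet₂]
  norm_num [map_ofNat]

end

end A240

/-- The derivation module of 𝒜₂₄₀ is not a free `S`-module. -/
theorem not_free_A240 : ¬ Module.Free S4 ↥(derivModule A240) := by
  intro hfree
  have hrel : (X 2 : S4) • (⟨A240.U, A240.U_mem⟩ : derivModule A240) =
      (X 0 : S4) • ⟨A240.V₁, A240.V₁_mem⟩ + (X 1 : S4) • ⟨A240.V₂, A240.V₂_mem⟩ :=
    Subtype.ext A240.X_two_smul_U
  obtain ⟨θ, η, hU⟩ :=
    Module.Free.exists_smul_add_smul_of_smul_eq (fun _ => A240.X_two_mul_mem_span_pair) hrel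
  have h := A240.obstruction_smul_add_smul θ.2 η.2
  rw [show (X 0 : S4) • θ.1 + (X 1 : S4) • η.1 = A240.U from congrArg Subtype.val hU,
    A240.obstruction_U] at h
  norm_num at h
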